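/- For the block operator 𝓛 = [[0, L],[1, 0]] on X = L²_odd(ℝ) × H²_odd(ℝ) with domain Y = H²_odd(ℝ) × H⁴_odd(ℝ), a complex number μ belongs to the resolvent set ρ(𝓛) if and only if μ² belongs to the resolvent set ρ(L) of L : H⁴_odd(ℝ) ⊂ L²_odd(ℝ) → L²_odd(ℝ); moreover μ is an eigenvalue of 𝓛 if and only if μ² is an eigenvalue of L. -/

import Mathlib

open MeasureTheory Filter Topology

noncomputable section

/-! ### Function space framework (classical-derivative model of Sobolev spaces) -/

/-- Membership in the Sobolev space `H^k(ℝ)`, modelled via classical derivatives: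
`ψ` is `k` times continuously differentiable and all derivatives up to order `k`
are square integrable. -/
def InHk (k : ℕ) (ψ : ℝ → ℝ) : Prop :=
  ContDiff ℝ k ψ ∧ ∀ j ≤ k, MemLp (iteratedDeriv j ψ) 2 (volume : Measure ℝ)

/-- Membership in `L²(ℝ)`. -/
def InL2 (ψ : ℝ → ℝ) : Prop := MemLp ψ 2 (volume : Measure ℝ)

/-- `ψ` agrees almost everywhere with a function in `H^k(ℝ)`. -/
def InHkAE (k : ℕ) (ψ : ℝ → ℝ) : Prop :=
  ∃ ψ', ψ =ᵐ[(volume : Measure ℝ)] ψ' ∧ InHk k ψ'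

/-- An odd function on `ℝ`. -/
def OddFun (ψ : ℝ → ℝ) : Prop := ∀ x, ψ (-x) = -ψ x

/-- The `L²(ℝ)` norm. -/
def L2norm (f : ℝ → ℝ) : ℝ := (eLpNorm f 2 (volume : Measure ℝ)).toReal

/-- The `H^k(ℝ)` norm. -/
def HkNorm (k : ℕ) (f : ℝ → ℝ) : ℝ :=
  ∑ j ∈ Finset.range (k + 1), (eLpNorm (iteratedDeriv j f) 2 (volume : Measure ℝ)).toReal

/-- The `L²(ℝ)` inner product. -/
def L2inner (f g : ℝ → ℝ) : ℝ := ∫ x : ℝ, f x * g x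

/-! ### The Camassa–Holm solitary wave profile -/

/-- The ODE `-cQ + cQ'' + 2κQ + (3/2)Q² - (1/2)(Q')² - QQ'' = 0` satisfied by the
profile of a solitary travelling wave `u(t,x) = Q(x - ct)` of the Camassa–Holm equation
`(1-∂ₓ²)uₜ + 3uuₓ + 2κuₓ - 2uₓu_{xx} - uu_{xxx} = 0`. -/
def CHWaveODE (κ c : ℝ) (Q : ℝ → ℝ) : Prop :=
  ∀ x : ℝ, -c * Q x + c * iteratedDeriv 2 Q x + 2 * κ * Q x + (3 / 2) * Q x ^ 2
      - (1 / 2) * (deriv Q x) ^ 2 - Q x * iteratedDeriv 2 Q x = 0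

/-- The standing hypotheses on the solitary wave profile `Q` of the Camassa–Holm equation
with speed `c > 2κ`: smooth, even, exponentially decaying together with all derivatives,
satisfying `c - Q > 2κ` pointwise and the profile ODE. -/
structure CHProfile (κ c : ℝ) (Q : ℝ → ℝ) : Prop where
  smooth : ∀ n : ℕ, ContDiff ℝ n Q
  even : ∀ x, Q (-x) = Q x
  decay : ∀ n : ℕ, ∃ C a : ℝ, 0 < a ∧ ∀ x : ℝ, |iteratedDeriv n Q x| ≤ C * Real.exp (-a * |x|)
  ellip : ∀ x, 2 * κ < c - Q x
  ode : CHWaveODE κ c Q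

/-! ### The operators `M`, `L` and the nonlinearity `N` -/

/-- `M = ∂ₓ(Q-c)∂ₓ + Q'' - 3Q + c - 2κ`, i.e.
`Mψ = (Q-c)ψ'' + Q'ψ' + (Q'' - 3Q + c - 2κ)ψ`. -/
def Mop (κ c : ℝ) (Q : ℝ → ℝ) (ψ : ℝ → ℝ) : ℝ → ℝ := fun x =>
  (Q x - c) * iteratedDeriv 2 ψ x + deriv Q x * deriv ψ x
    + (iteratedDeriv 2 Q x - 3 * Q x + c - 2 * κ) * ψ x

/-- `L = -∂ₓ M ∂ₓ`. -/
def Lop (κ c : ℝ) (Q : ℝ → ℝ) (ψ : ℝ → ℝ) : ℝ → ℝ := fun x =>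
  -deriv (Mop κ c Q (deriv ψ)) x

/-- The nonlinearity `N(ψ) = ((1/2)ψ_{xx}² + ψₓψ_{xxx} - (3/2)ψₓ²)ₓ`. -/
def Nop (ψ : ℝ → ℝ) : ℝ → ℝ :=
  deriv fun x => (1 / 2) * (iteratedDeriv 2 ψ x) ^ 2
    + deriv ψ x * iteratedDeriv 3 ψ x - (3 / 2) * (deriv ψ x) ^ 2

/-! ### Spectral notions for (real) operators on `L²(ℝ)` with domain `D` -/

/-- `ψ` is an eigenfunction of `T` (with domain `D`) for the eigenvalue `μ`. -/
def IsEigenfun (T : (ℝ → ℝ) → ℝ → ℝ) (D : (ℝ → ℝ) → Prop) (μ : ℝ) (ψ : ℝ → ℝ) : Prop :=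
  D ψ ∧ ψ ≠ 0 ∧ ∀ x, T ψ x = μ * ψ x

/-- `μ` is an eigenvalue of `T` with domain `D`. -/
def IsEigenvalue (T : (ℝ → ℝ) → ℝ → ℝ) (D : (ℝ → ℝ) → Prop) (μ : ℝ) : Prop :=
  ∃ ψ, IsEigenfun T D μ ψ

/-- `μ` is a simple eigenvalue of `T`: it is an eigenvalue and any two eigenfunctions
are proportional. -/
def IsSimpleEigenvalue (T : (ℝ → ℝ) → ℝ → ℝ) (D : (ℝ → ℝ) → Prop) (μ : ℝ) : Prop :=
  IsEigenvalue T D μ ∧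
    ∀ ψ φ, IsEigenfun T D μ ψ → IsEigenfun T D μ φ → ∃ a : ℝ, ∀ x, φ x = a * ψ x

/-- `μ` belongs to the resolvent set of the operator `T` with domain `D`, regarded as an
operator on the space of functions satisfying `S`: for every right-hand side `f` in `S`
the equation `(T - μ)ψ = f` has a unique solution in `D`, with a bound `‖ψ‖_{L²} ≤ C‖f‖_{L²}`
uniform in `f`. -/
def InResolventOn (T : (ℝ → ℝ) → ℝ → ℝ) (D S : (ℝ → ℝ) → Prop) (μ : ℝ) : Prop :=
  ∃ C > 0, ∀ f, S f →
    (∃ ψ, D ψ ∧ (∀ᵐ x ∂(volume : Measure ℝ), T ψ x - μ * ψ x = f x) ∧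
      L2norm ψ ≤ C * L2norm f) ∧
    ∀ ψ φ, D ψ → D φ → (∀ᵐ x ∂(volume : Measure ℝ), T ψ x - μ * ψ x = f x) →
      (∀ᵐ x ∂(volume : Measure ℝ), T φ x - μ * φ x = f x) → ψ = φ

/-- Domain of `M`: `H²(ℝ)`. -/
def DomM : (ℝ → ℝ) → Prop := InHk 2

/-- Domain of `L`: `H⁴(ℝ)`. -/
def DomL : (ℝ → ℝ) → Prop := InHk 4

/-- Domain of `L` restricted to odd functions: `H⁴_odd(ℝ)`. -/
def DomLodd (ψ : ℝ → ℝ) : Prop := InHk 4 ψ ∧ OddFun ψ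

/-- `L²_odd(ℝ)`. -/
def L2odd (f : ℝ → ℝ) : Prop := InL2 f ∧ OddFun f

/-- `μ` belongs to the essential spectrum of `T` (domain `D`): there is a normalized
singular (Weyl) sequence, weakly null, with `(T - μ)ψₙ → 0` in `L²`. -/
def InEssSpectrum (T : (ℝ → ℝ) → ℝ → ℝ) (D : (ℝ → ℝ) → Prop) (μ : ℝ) : Prop :=
  ∃ ψ : ℕ → ℝ → ℝ, (∀ n, D (ψ n)) ∧ (∀ n, L2norm (ψ n) = 1) ∧
    (∀ f, InL2 f → Tendsto (fun n => L2inner (ψ n) f) atTop (𝓝 0)) ∧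
    Tendsto (fun n => L2norm fun x => T (ψ n) x - μ * ψ n x) atTop (𝓝 0)

/-! ### Complexified setting and the spatial-dynamics block operator `𝓛` -/

/-- Membership in the complex Sobolev space `H^k(ℝ; ℂ)`. -/
def InHkC (k : ℕ) (ψ : ℝ → ℂ) : Prop :=
  ContDiff ℝ k ψ ∧ ∀ j ≤ k, MemLp (iteratedDeriv j ψ) 2 (volume : Measure ℝ)

/-- Membership in `L²(ℝ; ℂ)`. -/
def InL2C (ψ : ℝ → ℂ) : Prop := MemLp ψ 2 (volume : Measure ℝ)

def OddFunC (ψ : ℝ → ℂ) : Prop := ∀ x, ψ (-x) = -ψ x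

def L2normC (f : ℝ → ℂ) : ℝ := (eLpNorm f 2 (volume : Measure ℝ)).toReal

def HkNormC (k : ℕ) (f : ℝ → ℂ) : ℝ :=
  ∑ j ∈ Finset.range (k + 1), (eLpNorm (iteratedDeriv j f) 2 (volume : Measure ℝ)).toReal

/-- The complexification of the operator `M`. -/
def MopC (κ c : ℝ) (Q : ℝ → ℝ) (ψ : ℝ → ℂ) : ℝ → ℂ := fun x =>
  (↑(Q x - c) : ℂ) * iteratedDeriv 2 ψ x + (↑(deriv Q x) : ℂ) * deriv ψ x
    + (↑(iteratedDeriv 2 Q x - 3 * Q x + c - 2 * κ) : ℂ) * ψ x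

/-- The complexification of the operator `L = -∂ₓ M ∂ₓ`. -/
def LopC (κ c : ℝ) (Q : ℝ → ℝ) (ψ : ℝ → ℂ) : ℝ → ℂ := fun x =>
  -deriv (MopC κ c Q (deriv ψ)) x

/-- Elements of the phase space: pairs `W = (W₁, W₂)` of complex-valued functions. -/
abbrev WSpace := (ℝ → ℂ) × (ℝ → ℂ)

/-- `W ∈ X = L²_odd(ℝ) × H²_odd(ℝ)`. -/
def InX (W : WSpace) : Prop :=
  (InL2C W.1 ∧ OddFunC W.1) ∧ (InHkC 2 W.2 ∧ OddFunC W.2)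

/-- `W ∈ Y = H²_odd(ℝ) × H⁴_odd(ℝ)`, the domain of `𝓛`. -/
def InY (W : WSpace) : Prop :=
  (InHkC 2 W.1 ∧ OddFunC W.1) ∧ (InHkC 4 W.2 ∧ OddFunC W.2)

/-- `‖W‖_X = ‖W₁‖_{L²} + ‖W₂‖_{H²}`. -/
def XnormC (W : WSpace) : ℝ := L2normC W.1 + HkNormC 2 W.2

/-- `‖W‖_Y = ‖W₁‖_{H²} + ‖W₂‖_{H⁴}`. -/
def YnormC (W : WSpace) : ℝ := HkNormC 2 W.1 + HkNormC 4 W.2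

/-- `W` solves the resolvent equation `(𝓛 - μ)W = F`, where `𝓛(W₁, W₂) = (L W₂, W₁)`. -/
def SolvesBlock (κ c : ℝ) (Q : ℝ → ℝ) (μ : ℂ) (W F : WSpace) : Prop :=
  (∀ᵐ x ∂(volume : Measure ℝ), LopC κ c Q W.2 x - μ * W.1 x = F.1 x) ∧
  (∀ᵐ x ∂(volume : Measure ℝ), W.1 x - μ * W.2 x = F.2 x)

/-- `μ ∈ ρ(𝓛)`: the resolvent equation is uniquely solvable in `Y` for every `F ∈ X`,
with an `X → X` bound. -/
def InResolventBlock (κ c : ℝ) (Q : ℝ → ℝ) (μ : ℂ) : Prop :=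
  ∃ C > 0, ∀ F, InX F →
    (∃ W, InY W ∧ SolvesBlock κ c Q μ W F ∧ XnormC W ≤ C * XnormC F) ∧
    ∀ W W', InY W → InY W' → SolvesBlock κ c Q μ W F → SolvesBlock κ c Q μ W' F → W = W'

/-- `W` is an eigenvector of the block operator `𝓛(W₁, W₂) = (L W₂, W₁)` for the
eigenvalue `μ`. -/
def IsBlockEigenfun (κ c : ℝ) (Q : ℝ → ℝ) (μ : ℂ) (W : WSpace) : Prop :=
  InY W ∧ W ≠ 0 ∧ (∀ x, LopC κ c Q W.2 x = μ * W.1 x) ∧ ∀ x, W.1 x = μ * W.2 x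

/-- `μ` is an eigenvalue of the block operator `𝓛`. -/
def IsEigenvalueBlock (κ c : ℝ) (Q : ℝ → ℝ) (μ : ℂ) : Prop :=
  ∃ W : WSpace, IsBlockEigenfun κ c Q μ W

/-- `μ ∈ ρ(L)` for the complexified operator `L : H⁴_odd ⊂ L²_odd → L²_odd`. -/
def InResolventLC (κ c : ℝ) (Q : ℝ → ℝ) (μ : ℂ) : Prop :=
  ∃ C > 0, ∀ f : ℝ → ℂ, InL2C f → OddFunC f →
    (∃ ψ, InHkC 4 ψ ∧ OddFunC ψ ∧
      (∀ᵐ x ∂(volume : Measure ℝ), LopC κ c Q ψ x - μ * ψ x = f x) ∧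
      L2normC ψ ≤ C * L2normC f) ∧
    ∀ ψ φ, InHkC 4 ψ ∧ OddFunC ψ → InHkC 4 φ ∧ OddFunC φ →
      (∀ᵐ x ∂(volume : Measure ℝ), LopC κ c Q ψ x - μ * ψ x = f x) →
      (∀ᵐ x ∂(volume : Measure ℝ), LopC κ c Q φ x - μ * φ x = f x) → ψ = φ

/-- `μ` is an eigenvalue of the complexified `L : H⁴_odd ⊂ L²_odd → L²_odd`. -/
def IsEigenvalueLC (κ c : ℝ) (Q : ℝ → ℝ) (μ : ℂ) : Prop :=
  ∃ ψ : ℝ → ℂ, InHkC 4 ψ ∧ OddFunC ψ ∧ ψ ≠ 0 ∧ ∀ x, LopC κ c Q ψ x = μ * ψ x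

/-! ### Real block operator setting (for the reversibility statement) -/

abbrev WSpaceR := (ℝ → ℝ) × (ℝ → ℝ)

/-- `W ∈ Y = H²_odd(ℝ) × H⁴_odd(ℝ)` (real-valued version). -/
def InYR (W : WSpaceR) : Prop :=
  (InHk 2 W.1 ∧ OddFun W.1) ∧ (InHk 4 W.2 ∧ OddFun W.2)

/-- `‖W‖_Y` (real-valued version). -/
def YnormR (W : WSpaceR) : ℝ := HkNorm 2 W.1 + HkNorm 4 W.2

/-- The block operator `𝓛(W₁, W₂) = (L W₂, W₁)` (real-valued version). -/
def blockLR (κ c : ℝ) (Q : ℝ → ℝ) (W : WSpaceR) : WSpaceR := (Lop κ c Q W.2, W.1)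

/-- The nonlinearity `𝓝(W₁, W₂) = (-N(W₂), 0)`. -/
def blockNR (W : WSpaceR) : WSpaceR := (fun x => -Nop W.2 x, 0)

/-- The reverser `S(W₁, W₂) = (-W₁, W₂)`. -/
def Srev (W : WSpaceR) : WSpaceR := (-W.1, W.2)

/-!
Componentwise, `(𝓛 - μ) W = F` reads `W₁ = μ W₂ + F₂` and `(L - μ²) W₂ = F₁ + μ F₂`, so the
resolvent equations and eigenvalue problems of `𝓛` at `μ` and of `L` at `μ²` correspond one to
one. The only analytic input is that the `L²` bound on the reduced solution `W₂` upgrades to the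
`H²` bound needed to control `W` in `X`. Integrating by parts twice,
`⟨Lψ, ψ⟩ = ∫ (c - Q) |ψ''|² + ∫ V |ψ'|²` with `V = Q'' - 3Q + c - 2κ` bounded; since
`c - Q ≥ 2κ > 0`, together with the interpolation `‖ψ'‖² ≤ ‖ψ‖ ‖ψ''‖` this gives
`‖ψ‖_{H²} ≤ K (‖Lψ‖ + ‖ψ‖)`.
-/

open Complex ComplexConjugate

theorem iteratedDeriv_zero_fun {𝕜 F : Type*} [NontriviallyNormedField 𝕜] [NormedAddCommGroup F]
    [NormedSpace 𝕜 F] (n : ℕ) : iteratedDeriv n (0 : 𝕜 → F) = 0 :=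
  funext fun _ => iteratedDeriv_const_zero

namespace InHkC

variable {k m : ℕ} {ψ φ : ℝ → ℂ}

theorem of_le (h : InHkC m ψ) (hk : k ≤ m) : InHkC k ψ :=
  ⟨h.1.of_le (by exact_mod_cast hk), fun j hj => h.2 j (hj.trans hk)⟩

theorem memLp (h : InHkC k ψ) : MemLp ψ 2 volume := by
  simpa using h.2 0 (Nat.zero_le k)

theorem hasDerivAt_iteratedDeriv (h : InHkC k ψ) {j : ℕ} (hj : j < k) (x : ℝ) :
    HasDerivAt (iteratedDeriv j ψ) (iteratedDeriv (j + 1) ψ x) x := by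
  rw [iteratedDeriv_succ]
  exact (h.1.differentiable_iteratedDeriv j (by exact_mod_cast hj) x).hasDerivAt

theorem add (hψ : InHkC k ψ) (hφ : InHkC k φ) : InHkC k (fun x => ψ x + φ x) := by
  refine ⟨hψ.1.add hφ.1, fun j hj => ?_⟩
  have hj' : (j : WithTop ℕ∞) ≤ k := by exact_mod_cast hj
  have h : iteratedDeriv j (fun x => ψ x + φ x) =
      fun x => iteratedDeriv j ψ x + iteratedDeriv j φ x :=
    funext fun x => iteratedDeriv_fun_add (hψ.1.of_le hj').contDiffAt (hφ.1.of_le hj').contDiffAt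
  rw [h]
  exact (hψ.2 j hj).add (hφ.2 j hj)

theorem const_mul (h : InHkC k ψ) (a : ℂ) : InHkC k (fun x => a * ψ x) := by
  refine ⟨contDiff_const.mul h.1, fun j hj => ?_⟩
  have h' : iteratedDeriv j (fun x => a * ψ x) = fun x => a * iteratedDeriv j ψ x :=
    funext fun _ => iteratedDeriv_const_mul_field a ψ
  rw [h']
  exact (h.2 j hj).const_mul a

theorem memLp_deriv (h : InHkC k ψ) (hk : 1 ≤ k) : MemLp (deriv ψ) 2 volume := by
  simpa using h.2 1 hk

theorem hasDerivAt (h : InHkC k ψ) (hk : 1 ≤ k) (x : ℝ) : HasDerivAt ψ (deriv ψ x) x := by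
  simpa using h.hasDerivAt_iteratedDeriv (j := 0) hk x

theorem hasDerivAt_deriv (h : InHkC k ψ) (hk : 2 ≤ k) (x : ℝ) :
    HasDerivAt (deriv ψ) (iteratedDeriv 2 ψ x) x := by
  simpa using h.hasDerivAt_iteratedDeriv (j := 1) hk x

theorem zero : InHkC k 0 :=
  ⟨contDiff_const, fun j _ => by simp [iteratedDeriv_zero_fun]⟩

end InHkC

namespace OddFunC

variable {ψ φ : ℝ → ℂ}

theorem zero : OddFunC 0 := fun _ => by simp

theorem add (hψ : OddFunC ψ) (hφ : OddFunC φ) : OddFunC (fun x => ψ x + φ x) := fun x => by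
  simp only [hψ x, hφ x, neg_add]

theorem const_mul (h : OddFunC ψ) (a : ℂ) : OddFunC (fun x => a * ψ x) := fun x => by
  simp only [h x, mul_neg]

end OddFunC

section Norms

variable {f g : ℝ → ℂ}

theorem L2normC_nonneg (f : ℝ → ℂ) : 0 ≤ L2normC f := ENNReal.toReal_nonneg

theorem L2normC_congr_ae (h : f =ᵐ[volume] g) : L2normC f = L2normC g := by
  rw [L2normC, L2normC, eLpNorm_congr_ae h]

theorem L2normC_add_le (hf : MemLp f 2 volume) (hg : MemLp g 2 volume) :
    L2normC (fun x => f x + g x) ≤ L2normC f + L2normC g := by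
  rw [L2normC, L2normC, L2normC, ← ENNReal.toReal_add hf.2.ne hg.2.ne]
  exact ENNReal.toReal_mono (ENNReal.add_ne_top.2 ⟨hf.2.ne, hg.2.ne⟩)
    (eLpNorm_add_le hf.1 hg.1 one_le_two)

theorem L2normC_const_mul (a : ℂ) (f : ℝ → ℂ) : L2normC (fun x => a * f x) = ‖a‖ * L2normC f := by
  change L2normC (a • f) = _
  rw [L2normC, L2normC, eLpNorm_const_smul, ENNReal.toReal_mul]
  simp

theorem HkNormC_nonneg (k : ℕ) (f : ℝ → ℂ) : 0 ≤ HkNormC k f :=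
  Finset.sum_nonneg fun _ _ => ENNReal.toReal_nonneg

theorem HkNormC_zero (k : ℕ) : HkNormC k 0 = 0 :=
  Finset.sum_eq_zero fun j _ => by simp [iteratedDeriv_zero_fun]

theorem HkNormC_two (f : ℝ → ℂ) :
    HkNormC 2 f = L2normC f + L2normC (deriv f) + L2normC (iteratedDeriv 2 f) := by
  simp [HkNormC, L2normC, Finset.sum_range_succ]

theorem L2normC_le_HkNormC (k : ℕ) (f : ℝ → ℂ) : L2normC f ≤ HkNormC k f := by
  have h := Finset.single_le_sum (f := fun j => (eLpNorm (iteratedDeriv j f) 2 volume).toReal)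
    (fun _ _ => ENNReal.toReal_nonneg) (Finset.mem_range.2 k.succ_pos)
  simpa [L2normC, HkNormC] using h

end Norms

section L2Pairing

variable {f g : ℝ → ℂ}

theorem integrable_mul_conj (hf : MemLp f 2 volume) (hg : MemLp g 2 volume) :
    Integrable (fun x => f x * conj (g x)) volume :=
  hf.integrable_mul hg.star

theorem integral_mul_conj_eq_inner (hf : MemLp f 2 volume) (hg : MemLp g 2 volume) :
    ∫ x, f x * conj (g x) = inner ℂ (hg.toLp g) (hf.toLp f) := by
  rw [L2.inner_def]
  refine integral_congr_ae ?_
  filter_upwards [hf.coeFn_toLp, hg.coeFn_toLp] with x hfx hgx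
  rw [RCLike.inner_apply, hfx, hgx]

theorem norm_integral_mul_conj_le (hf : MemLp f 2 volume) (hg : MemLp g 2 volume) :
    ‖∫ x, f x * conj (g x)‖ ≤ L2normC f * L2normC g := by
  rw [integral_mul_conj_eq_inner hf hg, mul_comm, L2normC, L2normC, ← Lp.norm_toLp f hf,
    ← Lp.norm_toLp g hg]
  exact norm_inner_le_norm (𝕜 := ℂ) _ _

theorem integral_mul_conj_self (hf : MemLp f 2 volume) :
    ∫ x, f x * conj (f x) = ((L2normC f ^ 2 : ℝ) : ℂ) := by
  rw [integral_mul_conj_eq_inner hf hf, inner_self_eq_norm_sq_to_K, Lp.norm_toLp]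
  push_cast
  rfl

theorem integral_deriv_mul_conj {u u' v v' : ℝ → ℂ} (hu : ∀ x, HasDerivAt u (u' x) x)
    (hv : ∀ x, HasDerivAt v (v' x) x) (hu2 : MemLp u 2 volume) (hu'2 : MemLp u' 2 volume)
    (hv2 : MemLp v 2 volume) (hv'2 : MemLp v' 2 volume) :
    ∫ x, u' x * conj (v x) = -∫ x, u x * conj (v' x) := by
  have hv_conj : ∀ x, HasDerivAt (fun y => conj (v y)) (conj (v' x)) x := fun x => (hv x).star
  rw [integral_mul_deriv_eq_deriv_mul_of_integrable (fun x _ => hu x) (fun x _ => hv_conj x)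
    (integrable_mul_conj hu2 hv'2) (integrable_mul_conj hu'2 hv2) (integrable_mul_conj hu2 hv2),
    neg_neg]

theorem mul_sq_L2normC_le_re_integral {a : ℝ → ℝ} {m : ℝ} (ha : MemLp a ⊤ volume)
    (hm : ∀ᵐ x, m ≤ a x) (hf : MemLp f 2 volume) :
    m * L2normC f ^ 2 ≤ (∫ x, (a x : ℂ) * f x * conj (f x)).re := by
  have hnormSq : Integrable (fun x => normSq (f x)) volume := by
    simpa [← Complex.sq_norm] using (memLp_two_iff_integrable_sq_norm hf.1).1 hf
  have hself : ∫ x, normSq (f x) = L2normC f ^ 2 := by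
    have h := integral_mul_conj_self hf
    simp_rw [Complex.mul_conj, integral_complex_ofReal] at h
    exact_mod_cast h
  have hpt : ∀ x, (a x : ℂ) * f x * conj (f x) = ((a x * normSq (f x) : ℝ) : ℂ) := fun x => by
    rw [mul_assoc, Complex.mul_conj]; push_cast; ring
  simp_rw [hpt, integral_complex_ofReal, ofReal_re, ← hself, ← integral_const_mul]
  exact integral_mono_ae (hnormSq.const_mul m) (hnormSq.mul_of_top_right ha)
    (hm.mono fun x hx => mul_le_mul_of_nonneg_right hx (normSq_nonneg _))

end L2Pairing

theorem MeasureTheory.MemLp.ofReal_mul {a : ℝ → ℝ} {f : ℝ → ℂ} (ha : MemLp a ⊤ volume)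
    (hf : MemLp f 2 volume) : MemLp (fun x => (a x : ℂ) * f x) 2 volume :=
  hf.mul ha.ofReal

theorem MeasureTheory.MemLp.exists_ae_norm_le {α E : Type*} [MeasurableSpace α] {μ : Measure α}
    [NormedAddCommGroup E] {f : α → E} (hf : MemLp f ⊤ μ) : ∃ K, ∀ᵐ x ∂μ, ‖f x‖ ≤ K := by
  refine ⟨(eLpNorm f ⊤ μ).toReal, ?_⟩
  filter_upwards [ae_le_eLpNormEssSup (f := f) (μ := μ)] with x hx
  rw [← toReal_enorm, eLpNorm_exponent_top]
  exact ENNReal.toReal_mono (eLpNorm_exponent_top (f := f) ▸ hf.2.ne) hx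

theorem le_mul_of_mul_sq_le {k A B s x : ℝ} (hk : 0 < k) (hA : 0 ≤ A) (hB : 0 ≤ B) (hs : 0 ≤ s)
    (h : k * x ^ 2 ≤ A * s ^ 2 + B * s * x) : x ≤ (1 + (A + B) / k) * s := by
  have hAB : 0 ≤ (A + B) / k * s := by positivity
  rcases le_or_gt x s with hxs | hsx
  · linarith
  · have hkx : k * x ≤ (A + B) * s := by
      have hx : 0 < x := hs.trans_lt hsx
      nlinarith [mul_le_mul_of_nonneg_left hsx.le (mul_nonneg hA hs)]
    have : x ≤ (A + B) / k * s := by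
      rw [div_mul_eq_mul_div, le_div_iff₀ hk]
      linarith
    linarith

def potentialM (κ c : ℝ) (Q : ℝ → ℝ) (x : ℝ) : ℝ :=
  iteratedDeriv 2 Q x - 3 * Q x + c - 2 * κ

section Energy

variable {κ c : ℝ} {Q : ℝ → ℝ} {ψ : ℝ → ℂ}

theorem sq_L2normC_deriv_le (hψ : InHkC 2 ψ) :
    L2normC (deriv ψ) ^ 2 ≤ L2normC ψ * L2normC (iteratedDeriv 2 ψ) := by
  have hψ1 := hψ.memLp_deriv (by norm_num)
  have hparts := integral_deriv_mul_conj (hψ.hasDerivAt (by norm_num))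
    (hψ.hasDerivAt_deriv le_rfl) hψ.memLp hψ1 hψ1 (hψ.2 2 le_rfl)
  rw [integral_mul_conj_self hψ1] at hparts
  calc L2normC (deriv ψ) ^ 2 = ‖((L2normC (deriv ψ) ^ 2 : ℝ) : ℂ)‖ := by
        rw [norm_real, Real.norm_of_nonneg (by positivity)]
    _ = ‖∫ x, ψ x * conj (iteratedDeriv 2 ψ x)‖ := by rw [hparts, norm_neg]
    _ ≤ L2normC ψ * L2normC (iteratedDeriv 2 ψ) :=
        norm_integral_mul_conj_le hψ.memLp (hψ.2 2 le_rfl)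

theorem memLp_top_potentialM (hbdd : ∀ n ≤ 2, MemLp (iteratedDeriv n Q) ⊤ volume) :
    MemLp (potentialM κ c Q) ⊤ volume := by
  convert (((hbdd 2 le_rfl).sub ((hbdd 0 (by norm_num)).const_mul 3)).add
    (memLp_top_const c)).sub (memLp_top_const (2 * κ)) using 1
  funext x
  simp [potentialM]

theorem MopC_deriv_eq (ψ : ℝ → ℂ) : MopC κ c Q (deriv ψ) = fun x =>
    (((deriv Q x : ℝ) : ℂ) * iteratedDeriv 2 ψ x + ((Q x - c : ℝ) : ℂ) * iteratedDeriv 3 ψ x) +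
      (potentialM κ c Q x : ℂ) * deriv ψ x := by
  funext x
  simp only [MopC, potentialM, ← iteratedDeriv_succ',
    show deriv (deriv ψ) = iteratedDeriv 2 ψ by simp [iteratedDeriv_succ]]
  ring

theorem memLp_top_sub_const (hbdd : ∀ n ≤ 2, MemLp (iteratedDeriv n Q) ⊤ volume) :
    MemLp (fun x => Q x - c) ⊤ volume := by
  have h := (hbdd 0 (by norm_num)).sub (memLp_top_const c)
  rwa [iteratedDeriv_zero] at h

theorem memLp_deriv_sub_mul_iteratedDeriv_two (hbdd : ∀ n ≤ 2, MemLp (iteratedDeriv n Q) ⊤ volume)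
    (hψ : InHkC 3 ψ) :
    MemLp (fun x => ((deriv Q x : ℝ) : ℂ) * iteratedDeriv 2 ψ x +
      ((Q x - c : ℝ) : ℂ) * iteratedDeriv 3 ψ x) 2 volume := by
  have hQ' : MemLp (deriv Q) ⊤ volume := by simpa using hbdd 1 (by norm_num)
  exact (hQ'.ofReal_mul (hψ.2 2 (by norm_num))).add
    ((memLp_top_sub_const hbdd).ofReal_mul (hψ.2 3 le_rfl))

theorem memLp_MopC_deriv (hbdd : ∀ n ≤ 2, MemLp (iteratedDeriv n Q) ⊤ volume)
    (hψ : InHkC 3 ψ) : MemLp (MopC κ c Q (deriv ψ)) 2 volume := by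
  rw [MopC_deriv_eq]
  exact (memLp_deriv_sub_mul_iteratedDeriv_two hbdd hψ).add
    ((memLp_top_potentialM hbdd).ofReal_mul (hψ.memLp_deriv (by norm_num)))

theorem integral_MopC_deriv_mul_conj (hQ : Differentiable ℝ Q)
    (hbdd : ∀ n ≤ 2, MemLp (iteratedDeriv n Q) ⊤ volume) (hψ : InHkC 3 ψ) :
    ∫ x, MopC κ c Q (deriv ψ) x * conj (deriv ψ x) =
      (∫ x, ((c - Q x : ℝ) : ℂ) * iteratedDeriv 2 ψ x * conj (iteratedDeriv 2 ψ x)) +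
        ∫ x, (potentialM κ c Q x : ℂ) * deriv ψ x * conj (deriv ψ x) := by
  have hψ1 := hψ.memLp_deriv (by norm_num)
  have hψ2 := hψ.2 2 (by norm_num)
  set r' : ℝ → ℂ := fun x =>
    ((deriv Q x : ℝ) : ℂ) * iteratedDeriv 2 ψ x + ((Q x - c : ℝ) : ℂ) * iteratedDeriv 3 ψ x
    with hr'_def
  have hr : ∀ x, HasDerivAt (fun y => ((Q y - c : ℝ) : ℂ) * iteratedDeriv 2 ψ y) (r' x) x :=
    fun x => (((hQ x).hasDerivAt.sub_const c).ofReal_comp).mul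
      (hψ.hasDerivAt_iteratedDeriv (by norm_num) x)
  have hr' : MemLp r' 2 volume := memLp_deriv_sub_mul_iteratedDeriv_two hbdd hψ
  have hVψ := (memLp_top_potentialM (κ := κ) (c := c) hbdd).ofReal_mul hψ1
  have hsplit : ∀ x, MopC κ c Q (deriv ψ) x * conj (deriv ψ x) =
      r' x * conj (deriv ψ x) + (potentialM κ c Q x : ℂ) * deriv ψ x * conj (deriv ψ x) :=
    fun x => by rw [MopC_deriv_eq, hr'_def, add_mul]
  simp_rw [hsplit]
  rw [integral_add (integrable_mul_conj hr' hψ1) (integrable_mul_conj hVψ hψ1),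
    integral_deriv_mul_conj hr (hψ.hasDerivAt_deriv (by norm_num))
      ((memLp_top_sub_const hbdd).ofReal_mul hψ2) hr' hψ1 hψ2, ← integral_neg]
  congr 2
  funext x
  push_cast
  ring

theorem differentiable_MopC_deriv (hQ : ContDiff ℝ 3 Q) (hψ : InHkC 4 ψ) :
    Differentiable ℝ (MopC κ c Q (deriv ψ)) := by
  have dQ : ∀ j < 3, Differentiable ℝ (iteratedDeriv j Q) := fun j hj =>
    hQ.differentiable_iteratedDeriv j (by exact_mod_cast hj)
  have dψ : ∀ j < 4, Differentiable ℝ (iteratedDeriv j ψ) := fun j hj =>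
    hψ.1.differentiable_iteratedDeriv j (by exact_mod_cast hj)
  have dQ0 : Differentiable ℝ Q := by simpa using dQ 0 (by norm_num)
  have dQ1 : Differentiable ℝ (deriv Q) := by simpa using dQ 1 (by norm_num)
  have dQ2 := dQ 2 (by norm_num)
  have dψ1 : Differentiable ℝ (deriv ψ) := by simpa using dψ 1 (by norm_num)
  have dψ2 := dψ 2 (by norm_num)
  have dψ3 := dψ 3 (by norm_num)
  rw [MopC_deriv_eq]
  simp only [potentialM]
  fun_prop

theorem integral_LopC_mul_conj (hQ : ContDiff ℝ 3 Q)
    (hbdd : ∀ n ≤ 2, MemLp (iteratedDeriv n Q) ⊤ volume) (hψ : InHkC 4 ψ)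
    (hL : MemLp (LopC κ c Q ψ) 2 volume) :
    ∫ x, LopC κ c Q ψ x * conj (ψ x) = ∫ x, MopC κ c Q (deriv ψ) x * conj (deriv ψ x) := by
  have hM' : deriv (MopC κ c Q (deriv ψ)) = -LopC κ c Q ψ := by
    funext x
    simp [LopC]
  have hparts := integral_deriv_mul_conj
    (fun x => (differentiable_MopC_deriv hQ hψ x).hasDerivAt) (hψ.hasDerivAt (by norm_num))
    (memLp_MopC_deriv hbdd (hψ.of_le (by norm_num))) (hM' ▸ hL.neg) hψ.memLp
    (hψ.memLp_deriv (by norm_num))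
  rw [← neg_eq_iff_eq_neg, ← integral_neg, hM'] at hparts
  simpa using hparts

theorem exists_energy_bound (hQ : ContDiff ℝ 3 Q)
    (hbdd : ∀ n ≤ 2, MemLp (iteratedDeriv n Q) ⊤ volume) (hell : ∀ x, 2 * κ ≤ c - Q x) :
    ∃ B, 0 ≤ B ∧ ∀ ψ, InHkC 4 ψ → MemLp (LopC κ c Q ψ) 2 volume →
      2 * κ * L2normC (iteratedDeriv 2 ψ) ^ 2 ≤
        L2normC (LopC κ c Q ψ) * L2normC ψ + B * L2normC (deriv ψ) ^ 2 := by
  obtain ⟨B, hB⟩ := (memLp_top_potentialM (κ := κ) (c := c) hbdd).exists_ae_norm_le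
  refine ⟨max B 0, le_max_right _ _, fun ψ hψ hL => ?_⟩
  have hcQ : MemLp (fun x => c - Q x) ⊤ volume := by
    have h := (memLp_top_const c).sub (hbdd 0 (by norm_num))
    rwa [iteratedDeriv_zero] at h
  have hcoercive := mul_sq_L2normC_le_re_integral hcQ (ae_of_all _ hell) (hψ.2 2 (by norm_num))
  have hpotential := mul_sq_L2normC_le_re_integral (m := -max B 0) (memLp_top_potentialM hbdd)
    (hB.mono fun x hx => neg_le_of_abs_le (hx.trans (le_max_left _ _)))
    (hψ.memLp_deriv (by norm_num))
  have hCS := (re_le_norm _).trans (norm_integral_mul_conj_le hL hψ.memLp)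
  rw [integral_LopC_mul_conj hQ hbdd hψ hL,
    integral_MopC_deriv_mul_conj (hQ.differentiable (by norm_num)) hbdd (hψ.of_le (by norm_num)),
    add_re] at hCS
  linarith

theorem exists_HkNormC_two_le (hκ : 0 < κ) (hQ : ContDiff ℝ 3 Q)
    (hbdd : ∀ n ≤ 2, MemLp (iteratedDeriv n Q) ⊤ volume) (hell : ∀ x, 2 * κ ≤ c - Q x) :
    ∃ K, 0 ≤ K ∧ ∀ ψ, InHkC 4 ψ → MemLp (LopC κ c Q ψ) 2 volume →
      HkNormC 2 ψ ≤ K * (L2normC (LopC κ c Q ψ) + L2normC ψ) := by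
  obtain ⟨B, hB, hE⟩ := exists_energy_bound hQ hbdd hell
  set D := 1 + (1 + B) / (2 * κ)
  have hD : 0 ≤ D := by positivity
  refine ⟨2 + 2 * D, by positivity, fun ψ hψ hL => ?_⟩
  have hE := hE ψ hψ hL
  have hinterp := sq_L2normC_deriv_le (hψ.of_le (by norm_num))
  rw [HkNormC_two]
  set a := L2normC ψ
  set b := L2normC (deriv ψ)
  set d := L2normC (iteratedDeriv 2 ψ)
  set g := L2normC (LopC κ c Q ψ)
  have ha : 0 ≤ a := L2normC_nonneg _
  have hd : 0 ≤ d := L2normC_nonneg _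
  have hg : 0 ≤ g := L2normC_nonneg _
  -- with s = g + a: 2κ d² ≤ g a + B a d ≤ s² + B s d, and then b² ≤ a d ≤ D s²
  have hdD : d ≤ D * (g + a) := by
    refine le_mul_of_mul_sq_le (by positivity) zero_le_one hB (by positivity) ?_
    nlinarith [mul_le_mul_of_nonneg_left hinterp hB,
      mul_le_mul_of_nonneg_left (le_add_of_nonneg_left hg : a ≤ g + a) (mul_nonneg hB hd)]
  have hbD : b ≤ (1 + (D + 0) / 1) * (g + a) := by
    refine le_mul_of_mul_sq_le one_pos hD le_rfl (by positivity) ?_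
    nlinarith [mul_le_mul (le_add_of_nonneg_left hg : a ≤ g + a) hdD hd (by positivity)]
  nlinarith

end Energy

theorem CHProfile.memLp_top_iteratedDeriv {κ c : ℝ} {Q : ℝ → ℝ} (hQ : CHProfile κ c Q) (n : ℕ) :
    MemLp (iteratedDeriv n Q) ⊤ volume := by
  obtain ⟨C, a, ha, hC⟩ := hQ.decay n
  refine memLp_top_of_bound ((hQ.smooth n).continuous_iteratedDeriv n le_rfl).aestronglyMeasurable
    C (ae_of_all _ fun x => ?_)
  have hexp : Real.exp (-a * |x|) ≤ 1 := Real.exp_le_one_iff.2 (by nlinarith [abs_nonneg x])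
  have hC0 : 0 ≤ C := nonneg_of_mul_nonneg_left ((abs_nonneg _).trans (hC x)) (Real.exp_pos _)
  rw [Real.norm_eq_abs]
  nlinarith [hC x]

section Block

variable {κ c : ℝ} {Q : ℝ → ℝ} {μ : ℂ} {ψ : ℝ → ℂ} {W W' F : WSpace}

def blockLift (μ : ℂ) (ψ g : ℝ → ℂ) : WSpace := (fun x => μ * ψ x + g x, ψ)

theorem inY_blockLift (hψ : InHkC 4 ψ) (hψo : OddFunC ψ) {g : ℝ → ℂ} (hg : InHkC 2 g)
    (hgo : OddFunC g) : InY (blockLift μ ψ g) :=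
  ⟨⟨((hψ.of_le (by norm_num)).const_mul μ).add hg, (hψo.const_mul μ).add hgo⟩, hψ, hψo⟩

theorem solvesBlock_blockLift
    (h : ∀ᵐ x, LopC κ c Q ψ x - μ ^ 2 * ψ x = F.1 x + μ * F.2 x) :
    SolvesBlock κ c Q μ (blockLift μ ψ F.2) F := by
  refine ⟨?_, ae_of_all _ fun x => ?_⟩
  · filter_upwards [h] with x hx
    simp only [blockLift]
    linear_combination hx
  · simp [blockLift]

theorem SolvesBlock.reduce (h : SolvesBlock κ c Q μ W F) :
    ∀ᵐ x, LopC κ c Q W.2 x - μ ^ 2 * W.2 x = F.1 x + μ * F.2 x := by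
  filter_upwards [h.1, h.2] with x h1 h2
  linear_combination h1 + μ * h2

theorem SolvesBlock.ext (hW : InY W) (hW' : InY W') (h : SolvesBlock κ c Q μ W F)
    (h' : SolvesBlock κ c Q μ W' F) (h2 : W.2 = W'.2) : W = W' := by
  refine Prod.ext ((Continuous.ae_eq_iff_eq volume hW.1.1.1.continuous
    hW'.1.1.1.continuous).1 ?_) h2
  filter_upwards [h.2, h'.2] with x h1 h1'
  rw [h2] at h1
  linear_combination h1 - h1'

theorem InResolventBlock.inResolventLC_sq (h : InResolventBlock κ c Q μ) :
    InResolventLC κ c Q (μ ^ 2) := by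
  obtain ⟨C, hC, hsolve⟩ := h
  refine ⟨C, hC, fun f hf hfo => ?_⟩
  obtain ⟨⟨W, hW, hsol, hnorm⟩, huniq⟩ := hsolve (f, 0) ⟨⟨hf, hfo⟩, InHkC.zero, OddFunC.zero⟩
  refine ⟨⟨W.2, hW.2.1, hW.2.2, ?_, ?_⟩, fun ψ φ ⟨hψ, hψo⟩ ⟨hφ, hφo⟩ hψs hφs => ?_⟩
  · filter_upwards [hsol.reduce] with x hx
    simpa using hx
  · calc L2normC W.2 ≤ XnormC W :=
          (L2normC_le_HkNormC 2 W.2).trans (le_add_of_nonneg_left (L2normC_nonneg _))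
      _ ≤ C * XnormC (f, 0) := hnorm
      _ = C * L2normC f := by simp [XnormC, HkNormC_zero]
  · have hlift : ∀ χ : ℝ → ℂ, (∀ᵐ x, LopC κ c Q χ x - μ ^ 2 * χ x = f x) →
        SolvesBlock κ c Q μ (blockLift μ χ 0) (f, 0) := fun χ hχ =>
      solvesBlock_blockLift (F := (f, 0)) (by simpa using hχ)
    exact congrArg Prod.snd (huniq _ _ (inY_blockLift hψ hψo InHkC.zero OddFunC.zero)
      (inY_blockLift hφ hφo InHkC.zero OddFunC.zero) (hlift ψ hψs) (hlift φ hφs))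

theorem XnormC_blockLift_le {K C : ℝ} (hK : 0 ≤ K)
    (hHk : ∀ ψ, InHkC 4 ψ → MemLp (LopC κ c Q ψ) 2 volume →
      HkNormC 2 ψ ≤ K * (L2normC (LopC κ c Q ψ) + L2normC ψ))
    (hC : 0 ≤ C) (hF1 : InL2C F.1) (hF2 : InHkC 2 F.2) (hψ : InHkC 4 ψ)
    (hs : ∀ᵐ x, LopC κ c Q ψ x - μ ^ 2 * ψ x = F.1 x + μ * F.2 x)
    (hn : L2normC ψ ≤ C * L2normC (fun x => F.1 x + μ * F.2 x)) :
    XnormC (blockLift μ ψ F.2) ≤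
      (‖μ‖ * C * (1 + ‖μ‖) + 1 + K * ((‖μ‖ ^ 2 + 1) * C + 1) * (1 + ‖μ‖)) * XnormC F := by
  set f := fun x => F.1 x + μ * F.2 x
  have hf : MemLp f 2 volume := hF1.add (hF2.memLp.const_mul μ)
  have hF1X : L2normC F.1 ≤ XnormC F := le_add_of_nonneg_right (HkNormC_nonneg 2 F.2)
  have hF2X : L2normC F.2 ≤ XnormC F :=
    (L2normC_le_HkNormC 2 F.2).trans (le_add_of_nonneg_left (L2normC_nonneg _))
  have hfX : L2normC f ≤ (1 + ‖μ‖) * XnormC F := by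
    have h := L2normC_add_le hF1 (hF2.memLp.const_mul μ)
    rw [L2normC_const_mul] at h
    nlinarith [mul_le_mul_of_nonneg_left hF2X (norm_nonneg μ)]
  have hLψ : LopC κ c Q ψ =ᵐ[volume] fun x => μ ^ 2 * ψ x + f x := by
    filter_upwards [hs] with x hx
    linear_combination hx
  have hLψn : L2normC (LopC κ c Q ψ) ≤ ‖μ‖ ^ 2 * L2normC ψ + L2normC f := by
    rw [L2normC_congr_ae hLψ, ← norm_pow, ← L2normC_const_mul]
    exact L2normC_add_le (hψ.memLp.const_mul _) hf
  have hHkψ := hHk ψ hψ (((hψ.memLp.const_mul _).add hf).ae_eq hLψ.symm)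
  have hW1 := L2normC_add_le (hψ.memLp.const_mul μ) hF2.memLp
  rw [L2normC_const_mul] at hW1
  have hψX : L2normC ψ ≤ C * ((1 + ‖μ‖) * XnormC F) := hn.trans (by gcongr)
  have h1 : ‖μ‖ * L2normC ψ ≤ ‖μ‖ * (C * ((1 + ‖μ‖) * XnormC F)) :=
    mul_le_mul_of_nonneg_left hψX (norm_nonneg _)
  have h2 : (‖μ‖ ^ 2 + 1) * L2normC ψ ≤ (‖μ‖ ^ 2 + 1) * (C * ((1 + ‖μ‖) * XnormC F)) :=
    mul_le_mul_of_nonneg_left hψX (by positivity)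
  have h3 : HkNormC 2 ψ ≤
      K * ((‖μ‖ ^ 2 + 1) * (C * ((1 + ‖μ‖) * XnormC F)) + (1 + ‖μ‖) * XnormC F) :=
    hHkψ.trans (mul_le_mul_of_nonneg_left (by linarith) hK)
  show L2normC (fun x => μ * ψ x + F.2 x) + HkNormC 2 ψ ≤ _
  linarith

theorem inResolventBlock_of_inResolventLC_sq {K : ℝ} (hK : 0 ≤ K)
    (hHk : ∀ ψ, InHkC 4 ψ → MemLp (LopC κ c Q ψ) 2 volume →
      HkNormC 2 ψ ≤ K * (L2normC (LopC κ c Q ψ) + L2normC ψ))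
    (h : InResolventLC κ c Q (μ ^ 2)) : InResolventBlock κ c Q μ := by
  obtain ⟨C, hC, hsolve⟩ := h
  refine ⟨‖μ‖ * C * (1 + ‖μ‖) + 1 + K * ((‖μ‖ ^ 2 + 1) * C + 1) * (1 + ‖μ‖), by positivity,
    fun F ⟨⟨hF1, hF1o⟩, hF2, hF2o⟩ => ?_⟩
  obtain ⟨⟨ψ, hψ, hψo, hψs, hψn⟩, huniq⟩ :=
    hsolve _ (hF1.add (hF2.memLp.const_mul μ)) (hF1o.add (hF2o.const_mul μ))
  refine ⟨⟨blockLift μ ψ F.2, inY_blockLift hψ hψo hF2 hF2o, solvesBlock_blockLift hψs,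
    XnormC_blockLift_le hK hHk hC.le hF1 hF2 hψ hψs hψn⟩, fun W W' hW hW' hs hs' => ?_⟩
  exact hs.ext hW hW' hs' (huniq _ _ hW.2 hW'.2 hs.reduce hs'.reduce)

theorem isEigenvalueBlock_iff_isEigenvalueLC_sq :
    IsEigenvalueBlock κ c Q μ ↔ IsEigenvalueLC κ c Q (μ ^ 2) := by
  constructor
  · rintro ⟨W, hW, hne, hL, h1⟩
    refine ⟨W.2, hW.2.1, hW.2.2, fun h0 => hne ?_, fun x => by rw [hL, h1]; ring⟩
    ext x <;> simp [h1, h0]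
  · rintro ⟨ψ, hψ, hψo, hne, hL⟩
    refine ⟨blockLift μ ψ 0, inY_blockLift hψ hψo InHkC.zero OddFunC.zero,
      fun h0 => hne (congrArg Prod.snd h0), fun x => ?_, fun x => by simp [blockLift]⟩
    simp only [blockLift, hL, Pi.zero_apply]
    ring

end Block

theorem blockL_resolvent_and_eigenvalues_general (κ c : ℝ) (hκ : 0 < κ)
    (Q : ℝ → ℝ) (hQ : CHProfile κ c Q) :
    ∀ μ : ℂ,
      (InResolventBlock κ c Q μ ↔ InResolventLC κ c Q (μ ^ 2)) ∧
      (IsEigenvalueBlock κ c Q μ ↔ IsEigenvalueLC κ c Q (μ ^ 2)) := by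
  obtain ⟨K, hK, hHk⟩ := exists_HkNormC_two_le hκ (hQ.smooth 3)
    (fun n _ => hQ.memLp_top_iteratedDeriv n) (fun x => (hQ.ellip x).le)
  exact fun μ => ⟨⟨InResolventBlock.inResolventLC_sq, inResolventBlock_of_inResolventLC_sq hK hHk⟩,
    isEigenvalueBlock_iff_isEigenvalueLC_sq⟩

/-- For the block operator `𝓛 = [[0, L],[1, 0]]` on
`X = L²_odd × H²_odd` with domain `Y = H²_odd × H⁴_odd`, a complex number `μ` belongs to
`ρ(𝓛)` if and only if `μ²` belongs to `ρ(L)`, and `μ` is an eigenvalue of `𝓛` if and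
only if `μ²` is an eigenvalue of `L`. -/
theorem blockL_resolvent_and_eigenvalues (κ c : ℝ) (hκ : 0 < κ) (hc : 2 * κ < c)
    (Q : ℝ → ℝ) (hQ : CHProfile κ c Q) :
    ∀ μ : ℂ,
      (InResolventBlock κ c Q μ ↔ InResolventLC κ c Q (μ ^ 2)) ∧
      (IsEigenvalueBlock κ c Q μ ↔ IsEigenvalueLC κ c Q (μ ^ 2)) :=
  blockL_resolvent_and_eigenvalues_general κ c hκ Q hQ
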